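/- Let p > 1, N ≥ 2 an integer, k ∈ ℝ and 0 < a ≤ π/2. Suppose H : [0, a) → ℝ is continuous on [0, a), differentiable on (0, a), with H(0) = 0, and satisfies the H-equation on (0, a). Define y(x) = exp(∫₀ˣ H(t) dt) for x ∈ [0, a). Then y is twice differentiable on (0, a) and differentiable at 0, with y(0) = 1, y'(0) = 0, y(x) > 0 for all x ∈ [0, a), and y satisfies the profile equation on (0, a). -/

import Mathlib

/-!
With `y = exp (∫₀ˣ H)` one has `y' = H y` and `y'' = (H' + H²) y`. Substituting these into the
profile equation turns it into `y³` times the H-equation, and `y'(0) = H(0) y(0) = 0`.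
-/

noncomputable section
open Real Set Filter Topology

/-- `y` satisfies the profile equation (for parameters `p`, `N`, `k`) on the set `I`. -/
def ProfileEqOn (p : ℝ) (N : ℕ) (k : ℝ) (y : ℝ → ℝ) (I : Set ℝ) : Prop :=
  ∀ x ∈ I,
    ((p - 1) * (deriv y x) ^ 2 + k ^ 2 * (y x) ^ 2) * deriv (deriv y) x =
      ((3 - 2 * p) * k + p - (N : ℝ)) * k * y x * (deriv y x) ^ 2
        + (k * (1 - p) + p - (N : ℝ)) * k ^ 3 * (y x) ^ 3
        + (2 - (N : ℝ)) * deriv y x * Real.cot x * ((deriv y x) ^ 2 + k ^ 2 * (y x) ^ 2)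

/-- `H` satisfies the first-order H-equation (for parameters `p`, `N`, `k`) on the set `I`. -/
def HEqOn (p : ℝ) (N : ℕ) (k : ℝ) (H : ℝ → ℝ) (I : Set ℝ) : Prop :=
  ∀ x ∈ I,
    ((p - 1) * (H x) ^ 2 + k ^ 2) * deriv H x =
      (1 - p) * ((H x) ^ 2 + k ^ 2) ^ 2
        + ((H x) ^ 2 + k ^ 2) * (k * (p - (N : ℝ)) + (2 - (N : ℝ)) * H x * Real.cot x)

open MeasureTheory

section IntegralOnIco

variable {H : ℝ → ℝ} {b c x : ℝ}

theorem ContinuousOn.intervalIntegrable_of_mem_Ico (hH : ContinuousOn H (Ico b c))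
    (hx : x ∈ Ico b c) : IntervalIntegrable H volume b x :=
  (hH.mono fun _ ht => ⟨ht.1, ht.2.trans_lt hx.2⟩).intervalIntegrable_of_Icc hx.1

theorem ContinuousOn.hasDerivAt_integral_of_mem_Ioo (hH : ContinuousOn H (Ico b c))
    (hx : x ∈ Ioo b c) : HasDerivAt (fun u => ∫ t in b..u, H t) (H x) x := by
  have hIco : Ico b c ∈ 𝓝 x := mem_of_superset (isOpen_Ioo.mem_nhds hx) Ioo_subset_Ico_self
  exact intervalIntegral.integral_hasDerivAt_right
    (hH.intervalIntegrable_of_mem_Ico (Ioo_subset_Ico_self hx))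
    ⟨Ico b c, hIco, hH.aestronglyMeasurable measurableSet_Ico⟩ (hH.continuousAt hIco)

theorem ContinuousOn.hasDerivWithinAt_integral_Ici (hH : ContinuousOn H (Ico b c))
    (hx : x ∈ Ico b c) : HasDerivWithinAt (fun u => ∫ t in b..u, H t) (H x) (Ici x) x := by
  have hIco : Ico b c ∈ 𝓝[>] x :=
    mem_of_superset (Ioo_mem_nhdsGT hx.2) fun _ ht => ⟨hx.1.trans ht.1.le, ht.2⟩
  exact intervalIntegral.integral_hasDerivWithinAt_right (hH.intervalIntegrable_of_mem_Ico hx)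
    ⟨Ico b c, hIco, hH.aestronglyMeasurable measurableSet_Ico⟩
    ((hH x hx).mono_of_mem_nhdsWithin hIco)

end IntegralOnIco

theorem hasDerivAt_deriv_of_eventually_hasDerivAt_mul {y H : ℝ → ℝ} {x : ℝ}
    (hy : ∀ᶠ u in 𝓝 x, HasDerivAt y (H u * y u) u) (hH : DifferentiableAt ℝ H x) :
    HasDerivAt (deriv y) ((deriv H x + H x ^ 2) * y x) x := by
  have hderiv : deriv y =ᶠ[𝓝 x] fun u => H u * y u := hy.mono fun _ hu => hu.deriv
  have hprod := hH.hasDerivAt.mul hy.self_of_nhds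
  exact (hprod.congr_of_eventuallyEq hderiv).congr_deriv (by ring)

theorem profileEq_of_HEq {p k c H H' y : ℝ} {N : ℕ}
    (h : ((p - 1) * H ^ 2 + k ^ 2) * H' =
      (1 - p) * (H ^ 2 + k ^ 2) ^ 2 + (H ^ 2 + k ^ 2) * (k * (p - N) + (2 - N) * H * c)) :
    ((p - 1) * (H * y) ^ 2 + k ^ 2 * y ^ 2) * ((H' + H ^ 2) * y) =
      ((3 - 2 * p) * k + p - N) * k * y * (H * y) ^ 2 + (k * (1 - p) + p - N) * k ^ 3 * y ^ 3
        + (2 - N) * (H * y) * c * ((H * y) ^ 2 + k ^ 2 * y ^ 2) := by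
  linear_combination y ^ 3 * h

theorem profile_from_H_general (p : ℝ) (N : ℕ) (k : ℝ)
    (a : ℝ) (ha0 : 0 < a)
    (H : ℝ → ℝ)
    (hHc : ContinuousOn H (Ico 0 a))
    (hHd : ∀ x ∈ Ioo (0 : ℝ) a, DifferentiableAt ℝ H x)
    (hH0 : H 0 = 0)
    (hHeq : HEqOn p N k H (Ioo 0 a)) :
    ∀ y : ℝ → ℝ, y = (fun x => Real.exp (∫ t in (0 : ℝ)..x, H t)) →
      (∀ x ∈ Ioo (0 : ℝ) a, DifferentiableAt ℝ y x ∧ DifferentiableAt ℝ (deriv y) x) ∧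
      DifferentiableWithinAt ℝ y (Ici 0) 0 ∧
      y 0 = 1 ∧
      derivWithin y (Ici 0) 0 = 0 ∧
      (∀ x ∈ Ico (0 : ℝ) a, 0 < y x) ∧
      ProfileEqOn p N k y (Ioo 0 a) := by
  rintro y rfl
  set y : ℝ → ℝ := fun x => exp (∫ t in (0 : ℝ)..x, H t)
  have hy' : ∀ x ∈ Ioo 0 a, HasDerivAt y (H x * y x) x := fun x hx =>
    ((hHc.hasDerivAt_integral_of_mem_Ioo hx).exp).congr_deriv (mul_comm _ _)
  have hy'' : ∀ x ∈ Ioo 0 a, HasDerivAt (deriv y) ((deriv H x + H x ^ 2) * y x) x := fun x hx =>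
    hasDerivAt_deriv_of_eventually_hasDerivAt_mul
      (eventually_of_mem (isOpen_Ioo.mem_nhds hx) hy') (hHd x hx)
  have hy0 : HasDerivWithinAt y 0 (Ici 0) 0 := by
    simpa [hH0] using (hHc.hasDerivWithinAt_integral_Ici ⟨le_rfl, ha0⟩).exp
  refine ⟨fun x hx => ⟨(hy' x hx).differentiableAt, (hy'' x hx).differentiableAt⟩,
    hy0.differentiableWithinAt, by simp [y], hy0.derivWithin (uniqueDiffWithinAt_Ici 0),
    fun x _ => exp_pos _, fun x hx => ?_⟩
  rw [(hy' x hx).deriv, (hy'' x hx).deriv]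
  exact profileEq_of_HEq (hHeq x hx)

/-- If `H` solves the H-equation on `(0,a)` with `H(0) = 0`, then
`y(x) = exp(∫₀ˣ H)` is a positive solution of the profile equation on `(0,a)` with
`y(0) = 1` and `y'(0) = 0`. -/
theorem profile_from_H (p : ℝ) (hp : 1 < p) (N : ℕ) (hN : 2 ≤ N) (k : ℝ)
    (a : ℝ) (ha0 : 0 < a) (ha : a ≤ π / 2)
    (H : ℝ → ℝ)
    (hHc : ContinuousOn H (Ico 0 a))
    (hHd : ∀ x ∈ Ioo (0 : ℝ) a, DifferentiableAt ℝ H x)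
    (hH0 : H 0 = 0)
    (hHeq : HEqOn p N k H (Ioo 0 a)) :
    ∀ y : ℝ → ℝ, y = (fun x => Real.exp (∫ t in (0 : ℝ)..x, H t)) →
      (∀ x ∈ Ioo (0 : ℝ) a, DifferentiableAt ℝ y x ∧ DifferentiableAt ℝ (deriv y) x) ∧
      DifferentiableWithinAt ℝ y (Ici 0) 0 ∧
      y 0 = 1 ∧
      derivWithin y (Ici 0) 0 = 0 ∧
      (∀ x ∈ Ico (0 : ℝ) a, 0 < y x) ∧
      ProfileEqOn p N k y (Ioo 0 a) :=
  profile_from_H_general p N k a ha0 H hHc hHd hH0 hHeq
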